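/- Let A be a binary linear code of even length n such that every codeword of the dual code A⊥ has weight divisible by 4 (i.e., A⊥ is doubly even). Then for every vector a not in A, the coset A + a contains strictly fewer words of weight n/2 than A itself does. -/

import Mathlib

/-- Hamming weight of a vector in F₂ⁿ. -/
def wt {n : ℕ} (v : Fin n → ZMod 2) : ℕ :=
  (Finset.univ.filter fun j => v j ≠ 0).card

/-- Dual code: vectors orthogonal to every codeword. -/
def dualSet {n : ℕ} (A : Submodule (ZMod 2) (Fin n → ZMod 2)) : Set (Fin n → ZMod 2) :=
  {u | ∀ c ∈ A, ∑ j, u j * c j = 0}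

/-!
Let `D = A⊥` and let `N(c)` count the balanced words of `A + c`. Orthogonality of the characters
`u ↦ (-1)^(u ⬝ᵥ w)` over `D` gives `|D| N(c) = ∑_{u ∈ D} (-1)^(u ⬝ᵥ c) K_{n/2}(wt u)`, with `K` the
Krawtchouk polynomials. If `K_{n/2}(i) > 0` whenever `4 ∣ i`, each term for `c = a` is at most the
one for `c = 0`, strictly so for a `u ∈ D` with `u ⬝ᵥ a = 1`, which exists because `a ∉ A = D⊥`.
The positivity comes from the double-counting symmetry `C(n,i) K_k(i) = C(n,k) K_i(k)` together
with `K_i(m) = [Xⁱ] (1 - X²)ᵐ` for `n = 2m`.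
-/

open Finset Polynomial

lemma ZMod.sum_univ_two {M : Type*} [AddCommMonoid M] (f : ZMod 2 → M) :
    ∑ x, f x = f 0 + f 1 :=
  Fin.sum_univ_two f

lemma AddChar.map_sum_eq_prod {ι A M : Type*} [AddCommMonoid A] [CommMonoid M]
    (ψ : AddChar A M) (s : Finset ι) (f : ι → A) :
    ψ (∑ i ∈ s, f i) = ∏ i ∈ s, ψ (f i) :=
  map_prod ψ.toMonoidHom (fun i => Multiplicative.ofAdd (f i)) s

def signChar : AddChar (ZMod 2) ℤ where
  toFun x := (-1) ^ x.val
  map_zero_eq_one' := rfl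
  map_add_eq_mul' := by decide

lemma signChar_one : signChar 1 = -1 := rfl

lemma signChar_le_one (x : ZMod 2) : signChar x ≤ 1 := by
  revert x; decide

variable {n : ℕ}

lemma wt_le (v : Fin n → ZMod 2) : wt v ≤ n :=
  (card_filter_le _ _).trans (card_fin n).le

lemma prod_eq_pow_wt {M : Type*} [CommMonoid M] (f : ZMod 2 → M) (v : Fin n → ZMod 2) :
    ∏ j, f (v j) = f 1 ^ wt v * f 0 ^ (n - wt v) := by
  have hcompl : #{j | ¬ v j ≠ 0} = n - wt v := by
    rw [wt, filter_not, card_sdiff_of_subset (filter_subset _ _), card_univ, Fintype.card_fin]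
  have hf : ∀ j, f (v j) = if v j ≠ 0 then f 1 else f 0 := fun j => by
    split_ifs with h
    · exact congrArg f (Fin.eq_one_of_ne_zero _ h)
    · rw [not_not.1 h]
  rw [prod_congr rfl fun j _ => hf j, prod_ite, prod_const, prod_const, ← wt, hcompl]

lemma sum_signChar_dotProduct_mul_X_pow_wt (u : Fin n → ZMod 2) :
    ∑ v, C (signChar (u ⬝ᵥ v)) * X ^ wt v = (1 - X) ^ wt u * (1 + X : ℤ[X]) ^ (n - wt u) :=
  calc ∑ v, C (signChar (u ⬝ᵥ v)) * X ^ wt v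
      = ∑ v : Fin n → ZMod 2, ∏ j, C (signChar (u j * v j)) * X ^ (v j).val := by
        refine sum_congr rfl fun v _ => ?_
        rw [prod_mul_distrib, dotProduct, AddChar.map_sum_eq_prod, map_prod,
          prod_eq_pow_wt (fun x => (X : ℤ[X]) ^ x.val)]
        simp [ZMod.val_one]
    _ = ∏ j, ∑ x, C (signChar (u j * x)) * X ^ x.val := by rw [Fintype.prod_sum]
    _ = ∏ j, (1 + C (signChar (u j)) * X) := by
        refine prod_congr rfl fun j _ => ?_
        simp [ZMod.sum_univ_two, ZMod.val_one]
    _ = (1 - X) ^ wt u * (1 + X) ^ (n - wt u) := by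
        rw [prod_eq_pow_wt (fun x => 1 + C (signChar x) * X), signChar_one]
        simp [sub_eq_add_neg]

variable (n) in
def wordsOfWeight (k : ℕ) : Finset (Fin n → ZMod 2) := univ.filter fun v => wt v = k

/-- `krawtchouk n k i` is the value `K_k(i)` of the Krawtchouk polynomial of length `n`. -/
noncomputable def krawtchouk (n k i : ℕ) : ℤ := ((1 - X) ^ i * (1 + X) ^ (n - i) : ℤ[X]).coeff k

lemma sum_wordsOfWeight_signChar_dotProduct (k : ℕ) (u : Fin n → ZMod 2) :
    ∑ v ∈ wordsOfWeight n k, signChar (u ⬝ᵥ v) = krawtchouk n k (wt u) := by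
  rw [krawtchouk, ← sum_signChar_dotProduct_mul_X_pow_wt, finsetSum_coeff, wordsOfWeight,
    sum_filter]
  simp_rw [coeff_C_mul_X_pow, eq_comm (a := k)]

lemma card_wordsOfWeight (k : ℕ) : #(wordsOfWeight n k) = n.choose k := by
  have h := sum_wordsOfWeight_signChar_dotProduct k (0 : Fin n → ZMod 2)
  simp [krawtchouk, wt, coeff_one_add_X_pow] at h
  exact_mod_cast h

lemma sum_wordsOfWeight_sum_signChar_dotProduct (i k : ℕ) :
    ∑ u ∈ wordsOfWeight n i, ∑ v ∈ wordsOfWeight n k, signChar (u ⬝ᵥ v) =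
      n.choose i * krawtchouk n k i := by
  rw [← card_wordsOfWeight, ← nsmul_eq_mul, ← sum_const]
  refine sum_congr rfl fun u hu => ?_
  rw [sum_wordsOfWeight_signChar_dotProduct, (mem_filter.1 hu).2]

theorem choose_mul_krawtchouk_comm (n i k : ℕ) :
    n.choose i * krawtchouk n k i = n.choose k * krawtchouk n i k := by
  rw [← sum_wordsOfWeight_sum_signChar_dotProduct, ← sum_wordsOfWeight_sum_signChar_dotProduct,
    sum_comm]
  simp_rw [dotProduct_comm]

lemma coeff_one_sub_X_sq_pow (m s : ℕ) :
    ((1 - X ^ 2 : ℤ[X]) ^ m).coeff (2 * s) = (-1) ^ s * m.choose s := by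
  have h : (1 - X ^ 2 : ℤ[X]) ^ m =
      ∑ k ∈ range (m + 1), C ((-1) ^ k * (m.choose k : ℤ)) * X ^ (2 * k) := by
    rw [show (1 - X ^ 2 : ℤ[X]) = C (-1) * X ^ 2 + 1 by simp [sub_eq_neg_add], add_pow]
    refine sum_congr rfl fun k _ => ?_
    rw [one_pow, mul_one, mul_pow, ← C_pow, ← pow_mul, C_mul, ← C_eq_natCast]
    ring
  rw [h, finsetSum_coeff]
  simp_rw [coeff_C_mul_X_pow, Nat.mul_left_cancel_iff two_pos]
  rw [sum_ite_eq]
  split_ifs with hs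
  · rfl
  · rw [Nat.choose_eq_zero_of_lt (by simpa using hs)]
    simp

theorem krawtchouk_pos_of_four_dvd {m i : ℕ} (hi : i ≤ m + m) (h4 : 4 ∣ i) :
    0 < krawtchouk (m + m) m i := by
  obtain ⟨t, rfl⟩ := h4
  have hK : krawtchouk (m + m) (4 * t) m = m.choose (2 * t) := by
    rw [krawtchouk, Nat.add_sub_cancel, ← mul_pow,
      show (1 - X) * (1 + X) = (1 - X ^ 2 : ℤ[X]) by ring, show 4 * t = 2 * (2 * t) by ring,
      coeff_one_sub_X_sq_pow, pow_mul, neg_one_sq, one_pow, one_mul]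
  have hsymm := choose_mul_krawtchouk_comm (m + m) (4 * t) m
  rw [hK] at hsymm
  have hpos : 0 < ((m + m).choose m : ℤ) * m.choose (2 * t) :=
    mul_pos (mod_cast Nat.choose_pos (by omega)) (mod_cast Nat.choose_pos (by omega))
  exact pos_of_mul_pos_right (hsymm ▸ hpos) (Nat.cast_nonneg _)

section Dual

variable (A : Submodule (ZMod 2) (Fin n → ZMod 2))

def dualCode : Submodule (ZMod 2) (Fin n → ZMod 2) where
  carrier := dualSet A
  add_mem' {u w} hu hw c hc := by
    simp only [Pi.add_apply, add_mul, sum_add_distrib, hu c hc, hw c hc, add_zero]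
  zero_mem' c _ := by simp
  smul_mem' r u hu c hc := by
    simp only [Pi.smul_apply, smul_eq_mul, mul_assoc, ← mul_sum, hu c hc, mul_zero]

variable {A}

lemma exists_mem_dualCode_dotProduct_eq_one {w : Fin n → ZMod 2} (hw : w ∉ A) :
    ∃ u ∈ dualCode A, u ⬝ᵥ w = 1 := by
  obtain ⟨f, hfw, hfA⟩ := Submodule.exists_dual_map_eq_bot_of_notMem hw inferInstance
  have hf : ∀ c, (fun j => f fun i => if j = i then 1 else 0) ⬝ᵥ c = f c := fun c => by
    rw [LinearMap.pi_apply_eq_sum_univ f c, dotProduct]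
    simp only [smul_eq_mul, mul_comm]
  refine ⟨_, fun c hc => ?_, (hf w).trans (Fin.eq_one_of_ne_zero _ hfw)⟩
  have hfc : f c ∈ A.map f := Submodule.mem_map_of_mem hc
  rw [hfA, Submodule.mem_bot] at hfc
  exact (hf c).trans hfc

lemma sum_dualCode_signChar_dotProduct [Fintype (dualCode A)] [DecidablePred (· ∈ A)]
    (w : Fin n → ZMod 2) :
    ∑ u : dualCode A, signChar (↑u ⬝ᵥ w) =
      if w ∈ A then (Fintype.card (dualCode A) : ℤ) else 0 := by
  split_ifs with hw
  · have h (u : dualCode A) : signChar (↑u ⬝ᵥ w) = 1 := by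
      rw [show (u : Fin n → ZMod 2) ⬝ᵥ w = 0 from u.2 w hw, AddChar.map_zero_eq_one]
    simp [h]
  · obtain ⟨u₀, hu₀, hu₀w⟩ := exists_mem_dualCode_dotProduct_eq_one hw
    -- translating by `u₀` flips the sign of every term
    have h := Equiv.sum_comp (Equiv.addRight (⟨u₀, hu₀⟩ : dualCode A))
      fun u => signChar (↑u ⬝ᵥ w)
    simp only [Equiv.coe_addRight, Submodule.coe_add, add_dotProduct, hu₀w,
      AddChar.map_add_eq_mul, signChar_one, mul_neg_one, sum_neg_distrib] at h
    linarith

lemma card_dualCode_mul_card_filter_sub_mem [Fintype (dualCode A)] [DecidablePred (· ∈ A)]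
    (k : ℕ) (c : Fin n → ZMod 2) :
    (Fintype.card (dualCode A) : ℤ) * #{v ∈ wordsOfWeight n k | v - c ∈ A} =
      ∑ u : dualCode A, signChar (↑u ⬝ᵥ c) * krawtchouk n k (wt (u : Fin n → ZMod 2)) :=
  calc (Fintype.card (dualCode A) : ℤ) * #{v ∈ wordsOfWeight n k | v - c ∈ A}
      = ∑ v ∈ wordsOfWeight n k, ∑ u : dualCode A, signChar (↑u ⬝ᵥ (v - c)) := by
        simp_rw [sum_dualCode_signChar_dotProduct, sum_ite, sum_const_zero, add_zero, sum_const,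
          nsmul_eq_mul, mul_comm]
    _ = ∑ u : dualCode A, signChar (↑u ⬝ᵥ c) * krawtchouk n k (wt (u : Fin n → ZMod 2)) := by
        rw [sum_comm]
        refine sum_congr rfl fun u _ => ?_
        rw [← sum_wordsOfWeight_signChar_dotProduct, mul_sum]
        refine sum_congr rfl fun v _ => ?_
        rw [dotProduct_sub, CharTwo.sub_eq_add, AddChar.map_add_eq_mul, mul_comm]

end Dual

theorem coset_fewer_balanced_of_doubly_even_dual_general (n : ℕ) (hn : Even n)
    (A : Submodule (ZMod 2) (Fin n → ZMod 2))
    (hdual : ∀ u ∈ dualSet A, 4 ∣ wt u)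
    (a : Fin n → ZMod 2) (ha : a ∉ A) :
    {v | (∃ c ∈ A, v = c + a) ∧ wt v = n / 2}.ncard <
      {v | v ∈ A ∧ wt v = n / 2}.ncard := by
  classical
  obtain ⟨m, rfl⟩ := hn
  obtain ⟨u₀, hu₀, hu₀a⟩ := exists_mem_dualCode_dotProduct_eq_one ha
  have hK : ∀ u : dualCode A, 0 < krawtchouk (m + m) m (wt (u : Fin (m + m) → ZMod 2)) :=
    fun u => krawtchouk_pos_of_four_dvd (wt_le _) (hdual u u.2)
  have hlt : (Fintype.card (dualCode A) : ℤ) * #{v ∈ wordsOfWeight (m + m) m | v - a ∈ A} <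
      Fintype.card (dualCode A) * #{v ∈ wordsOfWeight (m + m) m | v - 0 ∈ A} := by
    rw [card_dualCode_mul_card_filter_sub_mem, card_dualCode_mul_card_filter_sub_mem]
    refine sum_lt_sum (fun u _ => ?_) ⟨⟨u₀, hu₀⟩, mem_univ _, ?_⟩
    · rw [dotProduct_zero, AddChar.map_zero_eq_one, one_mul]
      exact mul_le_of_le_one_left (hK u).le (signChar_le_one _)
    · rw [hu₀a, signChar_one, dotProduct_zero, AddChar.map_zero_eq_one]
      linarith [hK ⟨u₀, hu₀⟩]
  have hcard := Nat.cast_lt.1 (lt_of_mul_lt_mul_left hlt (Nat.cast_nonneg _))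
  have hcoset : ∀ v, (∃ c ∈ A, v = c + a) ↔ v - a ∈ A := fun v =>
    ⟨by rintro ⟨c, hc, rfl⟩; simpa, fun h => ⟨v - a, h, by simp⟩⟩
  rw [show (m + m) / 2 = m by omega]
  convert hcard using 1 <;> rw [← Set.ncard_coe_finset] <;> congr 1 <;> ext v <;>
    simp only [Set.mem_ofPred_eq, coe_filter, wordsOfWeight, mem_filter, mem_univ, true_and,
      hcoset, sub_zero] <;> exact and_comm

theorem coset_fewer_balanced_of_doubly_even_dual (n : ℕ) (hn : Even n) (hpos : 0 < n)
    (A : Submodule (ZMod 2) (Fin n → ZMod 2))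
    (hdual : ∀ u ∈ dualSet A, 4 ∣ wt u)
    (a : Fin n → ZMod 2) (ha : a ∉ A) :
    {v | (∃ c ∈ A, v = c + a) ∧ wt v = n / 2}.ncard <
      {v | v ∈ A ∧ wt v = n / 2}.ncard :=
  coset_fewer_balanced_of_doubly_even_dual_general n hn A hdual a ha
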